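/- arXiv:2403.13224 — 6 statements merged into one kernel-verified Lean document; each statement's English description precedes it below -/
import Mathlib

section
/- Let u ∈ ℝ^{n+1} be a unit vector with all entries nonzero. For all real x > 0 and all real y, F_u(x + iy) = |F_u(x + iy)|·exp(i·Φ_u(x, y)); that is, Φ_u(x, y) is congruent to the argument of F_u(x + iy) modulo 2π. In particular, if Φ_u(x, y) = 0 then F_u(x + iy) is a positive real number. -/
/-!
Each factor of `F_u(x + iy)` is `e^{i u x - u y} / (1 + i u (x + iy))`, and
`1 + i u (x + iy) = u · ((1/u - y) + i x)`. For `x > 0` the number `a + i x` has argument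
`arccot (a / x) ∈ (0, π)`; when `u < 0` the positive factor is `-u` and the remaining number is the
conjugate of `-(1/u - y) + i x`, which flips the sign of its argument. Arguments add under
products and subtract under quotients, and summing the factor arguments gives `Φ_u(x, y)`.
-/

open MeasureTheory

/-- The function `F_u(t) = ∏ j, e^{i u_j t} / (1 + i u_j t)`. -/
noncomputable def Fchar {m : ℕ} (u : Fin m → ℝ) (t : ℂ) : ℂ :=
  ∏ j, Complex.exp (Complex.I * u j * t) / (1 + Complex.I * u j * t)

/-- The continuous inverse cotangent with range `(0, π)`. -/
noncomputable def arccot (θ : ℝ) : ℝ := Real.pi / 2 - Real.arctan θ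

/-- The lifting `Φ_u(x, y)` of the argument of `F_u(x + iy)` (for `x > 0`). -/
noncomputable def Phi {m : ℕ} (u : Fin m → ℝ) (x y : ℝ) : ℝ :=
  x * ∑ j, u j
    - ∑ j ∈ Finset.univ.filter (fun j => 0 < u j), arccot ((1 / u j - y) / x)
    + ∑ j ∈ Finset.univ.filter (fun j => u j < 0), arccot (-(1 / u j - y) / x)

open Complex

/-- `θ` is an argument of `z` modulo `2π`; every angle works for `z = 0`. -/
def HasAngle (z : ℂ) (θ : ℝ) : Prop :=
  z = ‖z‖ * exp (I * θ)

namespace HasAngle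

variable {z w : ℂ} {α β : ℝ}

theorem div (hz : HasAngle z α) (hw : HasAngle w β) : HasAngle (z / w) (α - β) := by
  unfold HasAngle at *
  rw [norm_div, ofReal_div, ofReal_sub, mul_sub, exp_sub]
  nth_rewrite 1 [hz, hw]
  rw [mul_div_mul_comm]

theorem prod {ι : Type*} (s : Finset ι) {z : ι → ℂ} {θ : ι → ℝ}
    (h : ∀ i ∈ s, HasAngle (z i) (θ i)) : HasAngle (∏ i ∈ s, z i) (∑ i ∈ s, θ i) := by
  unfold HasAngle at *
  rw [norm_prod, ofReal_prod, ofReal_sum, Finset.mul_sum, exp_sum, ← Finset.prod_mul_distrib]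
  exact Finset.prod_congr rfl h

theorem conj (hz : HasAngle z α) : HasAngle (starRingEnd ℂ z) (-α) := by
  unfold HasAngle at *
  have := congrArg (starRingEnd ℂ) hz
  rw [map_mul, conj_ofReal, ← exp_conj, map_mul, conj_I, conj_ofReal] at this
  rwa [RCLike.norm_conj, ofReal_neg, mul_neg, ← neg_mul]

theorem ofReal_mul (hz : HasAngle z α) {r : ℝ} (hr : 0 ≤ r) : HasAngle (r * z) α := by
  unfold HasAngle at *
  rw [norm_mul, norm_real, Real.norm_of_nonneg hr, Complex.ofReal_mul]
  nth_rewrite 1 [hz]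
  ring

theorem im_eq_zero_and_re_pos (hz : HasAngle z 0) (hz0 : z ≠ 0) : z.im = 0 ∧ 0 < z.re := by
  unfold HasAngle at hz
  rw [ofReal_zero, mul_zero, exp_zero, mul_one] at hz
  rw [hz, ofReal_re, ofReal_im]
  exact ⟨rfl, norm_pos_iff.2 hz0⟩

end HasAngle

theorem hasAngle_exp (w : ℂ) : HasAngle (exp w) w.im := by
  unfold HasAngle
  rw [norm_exp, ofReal_exp, ← exp_add]
  congr 1
  nth_rewrite 1 [← re_add_im w]
  ring

theorem cos_arccot (t : ℝ) : Real.cos (arccot t) = t / √(1 + t ^ 2) := by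
  rw [arccot, Real.cos_pi_div_two_sub, Real.sin_arctan]

theorem sin_arccot (t : ℝ) : Real.sin (arccot t) = 1 / √(1 + t ^ 2) := by
  rw [arccot, Real.sin_pi_div_two_sub, Real.cos_arctan]

theorem hasAngle_add_I_mul (a : ℝ) {x : ℝ} (hx : 0 < x) : HasAngle (a + I * x) (arccot (a / x)) := by
  unfold HasAngle
  have hnorm : ‖(a : ℂ) + I * x‖ = x * √(1 + (a / x) ^ 2) := by
    have : a ^ 2 + x ^ 2 = x ^ 2 * (1 + (a / x) ^ 2) := by field_simp; ring
    rw [mul_comm I, norm_add_mul_I, this, Real.sqrt_mul (sq_nonneg x), Real.sqrt_sq hx.le]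
  have hs : (√(1 + (a / x) ^ 2) : ℂ) ≠ 0 := by
    exact_mod_cast (Real.sqrt_pos.2 (by positivity)).ne'
  have hx' : (x : ℂ) ≠ 0 := by exact_mod_cast hx.ne'
  rw [hnorm, mul_comm I (arccot _ : ℂ), exp_mul_I, ← ofReal_cos, ← ofReal_sin, cos_arccot, sin_arccot]
  push_cast
  generalize (√(1 + (a / x) ^ 2) : ℂ) = s at hs ⊢
  field_simp

noncomputable def denomAngle (u x y : ℝ) : ℝ :=
  if 0 < u then arccot ((1 / u - y) / x) else -arccot (-(1 / u - y) / x)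

theorem hasAngle_one_add_I_mul {u : ℝ} (hu : u ≠ 0) (y : ℝ) {x : ℝ} (hx : 0 < x) :
    HasAngle (1 + I * u * (x + I * y)) (denomAngle u x y) := by
  unfold denomAngle
  set a := 1 / u - y with ha
  have hu' : (u : ℂ) ≠ 0 := by exact_mod_cast hu
  split_ifs with hpos
  · have h : 1 + I * u * (x + I * y) = (u : ℝ) * ((a : ℂ) + I * x) := by
      rw [ha]; push_cast; field_simp; linear_combination (u * y : ℂ) * I_sq
    rw [h]
    exact (hasAngle_add_I_mul a hx).ofReal_mul hpos.le
  · have h : 1 + I * u * (x + I * y) = (-u : ℝ) * starRingEnd ℂ ((-a : ℝ) + I * x) := by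
      rw [ha, map_add, map_mul, conj_I, conj_ofReal, conj_ofReal]
      push_cast; field_simp; linear_combination (u * y : ℂ) * I_sq
    rw [h]
    exact (hasAngle_add_I_mul (-a) hx).conj.ofReal_mul (by linarith [hu.lt_or_gt.resolve_right hpos])

theorem hasAngle_Fchar_factor {u : ℝ} (hu : u ≠ 0) (y : ℝ) {x : ℝ} (hx : 0 < x) :
    HasAngle (exp (I * u * (x + I * y)) / (1 + I * u * (x + I * y)))
      (u * x - denomAngle u x y) := by
  have him : (I * u * (x + I * y)).im = u * x := by simp
  rw [← him]
  exact (hasAngle_exp _).div (hasAngle_one_add_I_mul hu y hx)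

theorem sum_factor_angles_eq_Phi {m : ℕ} {u : Fin m → ℝ} (hnz : ∀ j, u j ≠ 0) (x y : ℝ) :
    ∑ j, (u j * x - denomAngle (u j) x y) = Phi u x y := by
  have hneg : Finset.univ.filter (fun j => ¬ 0 < u j) = Finset.univ.filter (fun j => u j < 0) := by
    ext j
    simp only [Finset.mem_filter, Finset.mem_univ, true_and, not_lt]
    exact ⟨fun h => h.lt_of_ne (hnz j), le_of_lt⟩
  unfold Phi denomAngle
  rw [Finset.sum_sub_distrib, Finset.sum_ite, hneg, Finset.sum_neg_distrib, ← Finset.sum_mul]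
  ring

theorem Fchar_ne_zero {m : ℕ} {u : Fin m → ℝ} (hnz : ∀ j, u j ≠ 0) (y : ℝ) {x : ℝ} (hx : 0 < x) :
    Fchar u (x + I * y) ≠ 0 := by
  refine Finset.prod_ne_zero_iff.2 fun j _ => div_ne_zero (exp_ne_zero _) fun h => ?_
  have him : (1 + I * u j * (x + I * y)).im = u j * x := by simp
  rw [h, zero_im] at him
  exact mul_ne_zero (hnz j) hx.ne' him.symm

theorem stmt7_general (n : ℕ) (u : Fin (n + 1) → ℝ)
    (hnz : ∀ j, u j ≠ 0) (x y : ℝ) (hx : 0 < x) :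
    Fchar u (x + Complex.I * y) =
      (‖Fchar u (x + Complex.I * y)‖ : ℂ) * Complex.exp (Complex.I * Phi u x y) ∧
    (Phi u x y = 0 →
      (Fchar u (x + Complex.I * y)).im = 0 ∧ 0 < (Fchar u (x + Complex.I * y)).re) := by
  have hF : HasAngle (Fchar u (x + I * y)) (Phi u x y) := by
    rw [← sum_factor_angles_eq_Phi hnz]
    exact HasAngle.prod _ fun j _ => hasAngle_Fchar_factor (hnz j) y hx
  refine ⟨hF, fun hPhi => ?_⟩
  rw [hPhi] at hF
  exact hF.im_eq_zero_and_re_pos (Fchar_ne_zero hnz y hx)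

theorem stmt7 (n : ℕ) (u : Fin (n + 1) → ℝ) (hu : ∑ j, (u j) ^ 2 = 1)
    (hnz : ∀ j, u j ≠ 0) (x y : ℝ) (hx : 0 < x) :
    Fchar u (x + Complex.I * y) =
      (‖Fchar u (x + Complex.I * y)‖ : ℂ) * Complex.exp (Complex.I * Phi u x y) ∧
    (Phi u x y = 0 →
      (Fchar u (x + Complex.I * y)).im = 0 ∧ 0 < (Fchar u (x + Complex.I * y)).re) :=
  stmt7_general n u hnz x y hx
end

section
/- Let u ∈ ℝ^{n+1} be a unit vector with all entries nonzero, let m_+ = #{j : u_j > 0}, m_− = #{j : u_j < 0}, S = Σ_j u_j, and let x > 0. Then there exists a real y with Φ_u(x, y) = 0 if and only if −m_−·π < x·S < m_+·π; moreover such y is unique (if Φ_u(x, y₁) = 0 and Φ_u(x, y₂) = 0 then y₁ = y₂). -/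
open Real Filter Finset Topology Set

/-!
Every arccot term of `Φ_u(x, y)` moves in `y` in the direction that makes `Φ_u(x, ·)` decrease,
so `Φ_u(x, ·)` is continuous and strictly decreasing. As `y → -∞` the positive-entry terms tend
to `0` and the negative-entry terms to `π`, and the other way round as `y → +∞`; hence the range
of `Φ_u(x, ·)` is the open interval `(x S - m₊ π, x S + m₋ π)`, which contains `0` exactly
under the stated inequalities.
-/

theorem StrictAnti.range_eq_Ioo_of_tendsto {α δ : Type*} [LinearOrder α] [TopologicalSpace α]
    [OrderTopology α] [NoMaxOrder α] [NoMinOrder α] [PreconnectedSpace α] [Nonempty α]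
    [LinearOrder δ] [TopologicalSpace δ] [OrderTopology δ]
    {f : α → δ} (hf : StrictAnti f) (hc : Continuous f) {a b : δ}
    (htop : Tendsto f atTop (𝓝 a)) (hbot : Tendsto f atBot (𝓝 b)) :
    range f = Ioo a b := by
  refine Subset.antisymm ?_ fun c ⟨hac, hcb⟩ => ?_
  · rintro _ ⟨y, rfl⟩
    obtain ⟨y₁, hy₁⟩ := exists_gt y
    obtain ⟨y₀, hy₀⟩ := exists_lt y
    exact ⟨(hf.antitone.le_of_tendsto htop y₁).trans_lt (hf hy₁),
      (hf hy₀).trans_le (hf.antitone.ge_of_tendsto hbot y₀)⟩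
  · exact mem_range_of_exists_le_of_exists_ge hc
      (htop.eventually (eventually_le_nhds hac)).exists
      (hbot.eventually (eventually_ge_nhds hcb)).exists

lemma arccot_strictAnti : StrictAnti arccot := fun _ _ h => by
  unfold arccot
  linarith [arctan_strictMono h]

@[fun_prop]
lemma continuous_arccot : Continuous arccot := continuous_const.sub continuous_arctan

lemma tendsto_arccot_atTop : Tendsto arccot atTop (𝓝 0) := by
  show Tendsto (fun θ => π / 2 - arctan θ) _ _
  simpa using (tendsto_arctan_atTop.mono_right nhdsWithin_le_nhds).const_sub (π / 2)

lemma tendsto_arccot_atBot : Tendsto arccot atBot (𝓝 π) := by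
  show Tendsto (fun θ => π / 2 - arctan θ) _ _
  simpa using (tendsto_arctan_atBot.mono_right nhdsWithin_le_nhds).const_sub (π / 2)

lemma tendsto_sub_div_atTop_atBot {x : ℝ} (hx : 0 < x) (c : ℝ) :
    Tendsto (fun y => (c - y) / x) atTop atBot :=
  (tendsto_atBot_add_const_left _ c tendsto_neg_atTop_atBot).atBot_div_const hx

lemma tendsto_sub_div_atBot_atTop {x : ℝ} (hx : 0 < x) (c : ℝ) :
    Tendsto (fun y => (c - y) / x) atBot atTop :=
  (tendsto_atTop_add_const_left _ c tendsto_neg_atBot_atTop).atTop_div_const hx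

section Phi

variable {m : ℕ} (u : Fin m → ℝ) {x : ℝ}

lemma continuous_Phi : Continuous (Phi u x) := by
  unfold Phi
  fun_prop

lemma Phi_strictAnti (hx : 0 < x) (hu : ∃ j, u j ≠ 0) : StrictAnti (Phi u x) := by
  intro y₁ y₂ hy
  have hpos (j : Fin m) : arccot ((1 / u j - y₁) / x) < arccot ((1 / u j - y₂) / x) :=
    arccot_strictAnti (by gcongr)
  have hneg (j : Fin m) : arccot (-(1 / u j - y₂) / x) < arccot (-(1 / u j - y₁) / x) :=
    arccot_strictAnti (by gcongr)
  obtain ⟨j, hj⟩ := hu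
  unfold Phi
  set P := univ.filter fun j => 0 < u j
  set N := univ.filter fun j => u j < 0
  have hP := sum_le_sum fun j (_ : j ∈ P) => (hpos j).le
  have hN := sum_le_sum fun j (_ : j ∈ N) => (hneg j).le
  rcases hj.lt_or_gt with hj | hj
  · linarith [sum_lt_sum_of_nonempty (s := N) ⟨j, by simpa [N] using hj⟩ fun j _ => hneg j]
  · linarith [sum_lt_sum_of_nonempty (s := P) ⟨j, by simpa [P] using hj⟩ fun j _ => hpos j]

lemma tendsto_Phi_atTop (hx : 0 < x) :
    Tendsto (Phi u x) atTop
      (𝓝 (x * ∑ j, u j - #(univ.filter fun j => 0 < u j) * π)) := by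
  have hpos := tendsto_finsetSum (univ.filter fun j => 0 < u j) fun j _ =>
    tendsto_arccot_atBot.comp (tendsto_sub_div_atTop_atBot hx (1 / u j))
  have hneg := tendsto_finsetSum (univ.filter fun j => u j < 0) fun j _ =>
    tendsto_arccot_atTop.comp
      (tendsto_neg_atBot_atTop.comp (tendsto_sub_div_atTop_atBot hx (1 / u j)))
  unfold Phi
  simpa [Function.comp_def, ← neg_div] using (hpos.const_sub (x * ∑ j, u j)).add hneg

lemma tendsto_Phi_atBot (hx : 0 < x) :
    Tendsto (Phi u x) atBot
      (𝓝 (x * ∑ j, u j + #(univ.filter fun j => u j < 0) * π)) := by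
  have hpos := tendsto_finsetSum (univ.filter fun j => 0 < u j) fun j _ =>
    tendsto_arccot_atTop.comp (tendsto_sub_div_atBot_atTop hx (1 / u j))
  have hneg := tendsto_finsetSum (univ.filter fun j => u j < 0) fun j _ =>
    tendsto_arccot_atBot.comp
      (tendsto_neg_atTop_atBot.comp (tendsto_sub_div_atBot_atTop hx (1 / u j)))
  unfold Phi
  simpa [Function.comp_def, ← neg_div] using (hpos.const_sub (x * ∑ j, u j)).add hneg

lemma range_Phi (hx : 0 < x) (hu : ∃ j, u j ≠ 0) :
    range (Phi u x) = Ioo (x * ∑ j, u j - #(univ.filter fun j => 0 < u j) * π)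
      (x * ∑ j, u j + #(univ.filter fun j => u j < 0) * π) :=
  (Phi_strictAnti u hx hu).range_eq_Ioo_of_tendsto (continuous_Phi u)
    (tendsto_Phi_atTop u hx) (tendsto_Phi_atBot u hx)

end Phi

theorem stmt9_general (n : ℕ) (u : Fin (n + 1) → ℝ)
    (hnz : ∀ j, u j ≠ 0) (x : ℝ) (hx : 0 < x) :
    ((∃ y : ℝ, Phi u x y = 0) ↔
      (-((Finset.univ.filter (fun j => u j < 0)).card * Real.pi) < x * ∑ j, u j ∧
        x * ∑ j, u j < (Finset.univ.filter (fun j => 0 < u j)).card * Real.pi)) ∧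
    (∀ y₁ y₂ : ℝ, Phi u x y₁ = 0 → Phi u x y₂ = 0 → y₁ = y₂) := by
  have hu : ∃ j, u j ≠ 0 := ⟨0, hnz 0⟩
  refine ⟨?_, fun y₁ y₂ h₁ h₂ => (Phi_strictAnti u hx hu).injective (h₁.trans h₂.symm)⟩
  change 0 ∈ range (Phi u x) ↔ _
  rw [range_Phi u hx hu, Set.mem_Ioo]
  constructor <;> rintro ⟨h₁, h₂⟩ <;> constructor <;> linarith

theorem stmt9 (n : ℕ) (u : Fin (n + 1) → ℝ) (hu : ∑ j, (u j) ^ 2 = 1)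
    (hnz : ∀ j, u j ≠ 0) (x : ℝ) (hx : 0 < x) :
    ((∃ y : ℝ, Phi u x y = 0) ↔
      (-((Finset.univ.filter (fun j => u j < 0)).card * Real.pi) < x * ∑ j, u j ∧
        x * ∑ j, u j < (Finset.univ.filter (fun j => 0 < u j)).card * Real.pi)) ∧
    (∀ y₁ y₂ : ℝ, Phi u x y₁ = 0 → Phi u x y₂ = 0 → y₁ = y₂) :=
  stmt9_general n u hnz x hx
end

section
/- Let u ∈ ℝ^{n+1} be a unit vector with all entries nonzero. For every ε > 0 there exists δ > 0 such that for every x with 0 < x < δ and every real y with Φ_u(x, y) = 0, one has |y| < ε. (That is, the implicitly defined contour height y_u(x) tends to 0 as x → 0⁺.) -/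
lemma arctan_le_self' {s : ℝ} (hs : 0 ≤ s) : Real.arctan s ≤ s := by
  have h : ∀ t : ℝ, HasDerivAt (fun z => z - Real.arctan z) (1 - 1/(1+t^2)) t :=
    fun t => (hasDerivAt_id t).sub (Real.hasDerivAt_arctan t)
  have hmono : Monotone (fun z : ℝ => z - Real.arctan z) := by
    apply monotone_of_deriv_nonneg
    · exact fun t => ((h t).differentiableAt)
    · intro t
      rw [(h t).deriv]
      have : 1/(1+t^2) ≤ 1 := by
        rw [div_le_one (by positivity)]; nlinarith
      linarith
  have := hmono hs
  simp [Real.arctan_zero] at this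
  linarith

lemma arctan_ge_cubic {s : ℝ} (hs : 0 ≤ s) : s - s^3/3 ≤ Real.arctan s := by
  have h : ∀ t : ℝ, HasDerivAt (fun z => Real.arctan z - z + z^3/3)
      (1/(1+t^2) - 1 + (3*t^2)/3) t := by
    intro t
    exact ((Real.hasDerivAt_arctan t).sub (hasDerivAt_id t)).add
      (((hasDerivAt_pow 3 t).div_const 3).congr_deriv (by ring))
  have hmono : Monotone (fun z : ℝ => Real.arctan z - z + z^3/3) := by
    apply monotone_of_deriv_nonneg
    · exact fun t => (h t).differentiableAt
    · intro t
      rw [(h t).deriv]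
      have h1 : (0:ℝ) < 1 + t^2 := by positivity
      have : 1 - t^2 ≤ 1/(1+t^2) := by
        rw [le_div_iff₀ h1]; nlinarith
      nlinarith
  have := hmono hs
  simp [Real.arctan_zero] at this
  linarith

lemma arccot_eq_arctan_inv {t : ℝ} (ht : 0 < t) : arccot t = Real.arctan t⁻¹ := by
  rw [arccot, Real.arctan_inv_of_pos ht]

lemma arccot_nonneg (t : ℝ) : 0 ≤ arccot t :=
  sub_nonneg.mpr (Real.arctan_lt_pi_div_two t).le

lemma arccot_pos (t : ℝ) : 0 < arccot t :=
  sub_pos.mpr (Real.arctan_lt_pi_div_two t)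

lemma arccot_anti {s t : ℝ} (h : s ≤ t) : arccot t ≤ arccot s :=
  sub_le_sub_left (Real.arctan_strictMono.monotone h) _


lemma arccot_le_inv {t : ℝ} (ht : 0 < t) : arccot t ≤ 1/t := by
  rw [arccot_eq_arctan_inv ht, ← one_div]
  exact arctan_le_self' (by positivity)

lemma arccot_ge_cubic {t : ℝ} (ht : 0 < t) : 1/t - 1/(3*t^3) ≤ arccot t := by
  rw [arccot_eq_arctan_inv ht]
  have := arctan_ge_cubic (s := t⁻¹) (by positivity)
  have e2 : t⁻¹ - (t⁻¹)^3/3 = 1/t - 1/(3*t^3) := by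
    field_simp
  rw [e2] at this
  exact this

lemma Phi_neg {m : ℕ} (u : Fin m → ℝ) (x y : ℝ) :
    Phi (fun j => -u j) x (-y) = -Phi u x y := by
  rw [Phi, Phi]
  have h1 : (Finset.univ.filter (fun j : Fin m => 0 < -u j))
      = Finset.univ.filter (fun j => u j < 0) := by
    apply Finset.filter_congr; intro j _; simp [neg_pos]
  have h2 : (Finset.univ.filter (fun j : Fin m => -u j < 0))
      = Finset.univ.filter (fun j => 0 < u j) := by
    apply Finset.filter_congr; intro j _; simp [neg_neg_iff_pos]
  rw [h1, h2]
  have e1 : ∀ j : Fin m, (1 / (-u j) - -y) / x = -(1 / u j - y) / x := by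
    intro j; rw [one_div_neg_eq_neg_one_div]; ring
  have e2 : ∀ j : Fin m, -(1 / (-u j) - -y) / x = (1 / u j - y) / x := by
    intro j; rw [one_div_neg_eq_neg_one_div]; ring
  simp only [e1, e2, Finset.sum_neg_distrib, mul_neg]
  ring

set_option maxHeartbeats 2000000 in
lemma key {n : ℕ} (u : Fin (n+1) → ℝ) (hnz : ∀ j, u j ≠ 0) (ε : ℝ) (hε : 0 < ε)
    (hε2 : ∀ j, 0 < u j → u j * ε < 1) :
    ∃ δ > (0:ℝ), ∀ x : ℝ, 0 < x → x < δ → ∀ y : ℝ, ε ≤ y → Phi u x y ≠ 0 := by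
  classical
  set Jp := Finset.univ.filter (fun j : Fin (n+1) => 0 < u j) with hJp
  set Jn := Finset.univ.filter (fun j : Fin (n+1) => u j < 0) with hJn
  have hden : ∀ j, 0 < 1 - u j * ε := by
    intro j
    rcases lt_or_gt_of_ne (hnz j) with h | h
    · nlinarith
    · linarith [hε2 j h]
  set Q : ℝ := ∑ j ∈ Jp, u j / (1 - u j * ε) with hQ
  set R : ℝ := (∑ j, u j) + ∑ j ∈ Jn, (-(u j)) / (1 - u j * ε) with hR
  have hQ0 : 0 ≤ Q := Finset.sum_nonneg (fun j hj => by
    have hju : 0 < u j := (Finset.mem_filter.mp hj).2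
    exact div_nonneg hju.le (hden j).le)
  have hfilter : Finset.univ.filter (fun j : Fin (n+1) => ¬ 0 < u j) = Jn := by
    ext j
    simp only [hJn, Finset.mem_filter, Finset.mem_univ, true_and]
    constructor
    · intro h; exact lt_of_le_of_ne (not_lt.mp h) (hnz j)
    · intro h; exact not_lt.mpr h.le
  have hsplit : ∀ f : Fin (n+1) → ℝ,
      ∑ j, f j = (∑ j ∈ Jp, f j) + ∑ j ∈ Jn, f j := by
    intro f
    rw [← hfilter, hJp, Finset.sum_filter_add_sum_filter_not]
  have eQ : Q = (∑ j ∈ Jp, u j) + ∑ j ∈ Jp, ε*(u j)^2/(1 - u j*ε) := by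
    rw [hQ, ← Finset.sum_add_distrib]
    refine Finset.sum_congr rfl (fun j _ => ?_)
    have h0 := (hden j).ne'
    field_simp
    ring
  have eR : R = (∑ j ∈ Jp, u j) - ∑ j ∈ Jn, ε*(u j)^2/(1 - u j*ε) := by
    rw [hR, hsplit u, add_assoc, ← Finset.sum_add_distrib, sub_eq_add_neg,
      ← Finset.sum_neg_distrib]
    congr 1
    refine Finset.sum_congr rfl (fun j _ => ?_)
    have h0 := (hden j).ne'
    field_simp
    ring
  have hg : 0 < Q - R := by
    have he : Q - R = ∑ j, ε*(u j)^2/(1 - u j*ε) := by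
      rw [eQ, eR, hsplit (fun j => ε*(u j)^2/(1 - u j*ε))]
      ring
    rw [he]
    apply Finset.sum_pos
    · intro j _
      have h1 := hden j
      have h2 := hnz j
      positivity
    · exact Finset.univ_nonempty
  set T : ℝ := 1 + Q/(Q - R) with hT
  have hT1 : 1 ≤ T := le_add_of_nonneg_right (div_nonneg hQ0 hg.le)
  have hTQ : Q / (3*T^2) < Q - R := by
    have hgT : (Q - R) * T = (Q - R) + Q := by
      rw [hT]; field_simp
    rw [div_lt_iff₀ (by positivity)]
    have h1 : 0 ≤ (T - 1) * ((Q - R) + Q) := mul_nonneg (by linarith) (by linarith)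
    have h2 : (Q - R) * T * T = ((Q - R) + Q) * T := by rw [hgT]
    nlinarith [h1, h2, hg, hQ0, hT1]
  have hTfrac : 0 ≤ 1 - 1/(3*T^2) := by
    have h3 : (3:ℝ) ≤ 3*T^2 := by nlinarith
    have h4 : 1/(3*T^2) ≤ 1/3 := one_div_le_one_div_of_le (by norm_num) h3
    linarith
  have hTgt : R < (1 - 1/(3*T^2)) * Q := by
    have he : (1 - 1/(3*T^2)) * Q = Q - Q/(3*T^2) := by ring
    rw [he]; linarith
  clear_value T Q R
  refine ⟨arccot T / (Q + 1), div_pos (arccot_pos T) (by linarith), ?_⟩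
  intro x hx hxδ y hy heq
  have hEq : ∑ j ∈ Jp, arccot ((1/u j - y)/x)
      = x * (∑ j, u j) + ∑ j ∈ Jn, arccot ((y - 1/u j)/x) := by
    rw [Phi] at heq
    have h0 : ∀ j : Fin (n+1), -(1/u j - y)/x = (y - 1/u j)/x := fun j => by ring
    simp only [h0] at heq
    rw [← hJp, ← hJn] at heq
    linarith
  have hRHS : ∑ j ∈ Jp, arccot ((1/u j - y)/x) ≤ x * R := by
    have : ∀ j ∈ Jn, arccot ((y - 1/u j)/x) ≤ x * ((-(u j))/(1 - u j*ε)) := by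
      intro j hj
      have hju : u j < 0 := (Finset.mem_filter.mp hj).2
      have hinv : 1/u j < 0 := one_div_neg.mpr hju
      have hd1 : 0 < y - 1/u j := by linarith
      have ht : 0 < (y - 1/u j)/x := div_pos hd1 hx
      have h1 : arccot ((y - 1/u j)/x) ≤ x/(y - 1/u j) := by
        have := arccot_le_inv ht
        rwa [one_div_div] at this
      have hnu : 0 < -u j := neg_pos.mpr hju
      have hkey : (1 - u j*ε)/(-(u j)) ≤ y - 1/u j := by
        have he : (1 - u j*ε)/(-(u j)) = ε - 1/u j := by
          field_simp [hju.ne]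
          ring
        rw [he]; linarith
      have h2 : x/(y - 1/u j) ≤ x/((1 - u j*ε)/(-(u j))) :=
        div_le_div_of_nonneg_left hx.le (div_pos (hden j) hnu) hkey
      have h3 : x/((1 - u j*ε)/(-(u j))) = x * ((-(u j))/(1 - u j*ε)) := by
        rw [div_div_eq_mul_div, mul_div_assoc]
      linarith
    have hsum := Finset.sum_le_sum this
    rw [← Finset.mul_sum] at hsum
    rw [hEq, hR, mul_add]
    linarith
  by_cases hcase : ∀ j ∈ Jp, T < (1/u j - y)/x
  · have hLHS : (1 - 1/(3*T^2)) * (x * Q) ≤ ∑ j ∈ Jp, arccot ((1/u j - y)/x) := by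
      have he : (1 - 1/(3*T^2)) * (x * Q)
          = ∑ j ∈ Jp, (1 - 1/(3*T^2)) * (x * (u j/(1 - u j*ε))) := by
        rw [hQ, Finset.mul_sum, Finset.mul_sum]
      rw [he]
      apply Finset.sum_le_sum
      intro j hj
      have hju : 0 < u j := (Finset.mem_filter.mp hj).2
      have hTt' : T < (1/u j - y)/x := hcase j hj
      obtain ⟨t, htdef⟩ : ∃ t : ℝ, t = (1/u j - y)/x := ⟨_, rfl⟩
      rw [← htdef]
      have hTt : T < t := htdef ▸ hTt'
      have ht1 : 1 < t := lt_of_le_of_lt hT1 hTt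
      have ht0 : 0 < t := by linarith
      have hnum : 0 < 1/u j - y := by
        have he0 : 1/u j - y = t * x := by rw [htdef, div_mul_cancel₀ _ hx.ne']
        rw [he0]; positivity
      have hA : x * (u j/(1 - u j*ε)) ≤ 1/t := by
        have h1t : 1/t = x/(1/u j - y) := by rw [htdef, one_div_div]
        rw [h1t]
        have hub : 1/u j - y ≤ (1 - u j*ε)/(u j) := by
          have he2 : (1 - u j*ε)/(u j) = 1/u j - ε := by
            field_simp
          rw [he2]; linarith
        have h4 : x/((1 - u j*ε)/(u j)) = x * (u j/(1 - u j*ε)) := by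
          rw [div_div_eq_mul_div, mul_div_assoc]
        rw [← h4]
        exact div_le_div_of_nonneg_left hx.le hnum hub
      have hB : 1/(3*t^3) ≤ (1/(3*T^2)) * (1/t) := by
        have e : 1/(3*t^3) = (1/(3*t^2)) * (1/t) := by
          field_simp
        rw [e]
        apply mul_le_mul_of_nonneg_right _ (by positivity)
        apply one_div_le_one_div_of_le (by positivity)
        nlinarith
      have hC := arccot_ge_cubic ht0
      calc (1 - 1/(3*T^2)) * (x * (u j/(1 - u j*ε)))
          ≤ (1 - 1/(3*T^2)) * (1/t) := mul_le_mul_of_nonneg_left hA hTfrac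
        _ = 1/t - (1/(3*T^2)) * (1/t) := by ring
        _ ≤ 1/t - 1/(3*t^3) := by linarith
        _ ≤ arccot t := hC
    have hlt : x * R < x * ((1 - 1/(3*T^2)) * Q) := mul_lt_mul_of_pos_left hTgt hx
    have he3 : x * ((1 - 1/(3*T^2)) * Q) = (1 - 1/(3*T^2)) * (x * Q) := by ring
    linarith
  · push_neg at hcase
    obtain ⟨j0, hj0, hle⟩ := hcase
    have h1 : arccot T ≤ arccot ((1/u j0 - y)/x) := arccot_anti hle
    have h2 : arccot ((1/u j0 - y)/x) ≤ ∑ j ∈ Jp, arccot ((1/u j - y)/x) :=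
      Finset.single_le_sum (f := fun j => arccot ((1/u j - y)/x)) (fun j _ => arccot_nonneg _) hj0
    have h3 : x * R ≤ x * Q := mul_le_mul_of_nonneg_left (by linarith) hx.le
    have h4 : x * Q < arccot T := by
      have h5 : x * (Q+1) < (arccot T/(Q+1)) * (Q+1) :=
        mul_lt_mul_of_pos_right hxδ (by linarith)
      rw [div_mul_cancel₀ _ (by linarith : Q + (1:ℝ) ≠ 0)] at h5
      nlinarith
    linarith

theorem stmt10 (n : ℕ) (u : Fin (n + 1) → ℝ) (hu : ∑ j, (u j) ^ 2 = 1)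
    (hnz : ∀ j, u j ≠ 0) :
    ∀ ε > (0 : ℝ), ∃ δ > (0 : ℝ), ∀ x : ℝ, 0 < x → x < δ →
      ∀ y : ℝ, Phi u x y = 0 → |y| < ε := by
  intro ε hε
  set ε' := min ε (1/2) with hε'def
  have hε' : 0 < ε' := lt_min hε (by norm_num)
  have habs : ∀ j, |u j| ≤ 1 := by
    intro j
    have h1 : (u j)^2 ≤ 1 := by
      rw [← hu]
      exact Finset.single_le_sum (fun i _ => sq_nonneg (u i)) (Finset.mem_univ j)
    nlinarith [abs_nonneg (u j), sq_abs (u j)]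
  have h12 : ε' ≤ 1/2 := min_le_right _ _
  have hε2 : ∀ j, 0 < u j → u j * ε' < 1 := by
    intro j hj
    have h1 : u j ≤ 1 := le_of_abs_le (habs j)
    nlinarith
  have hε2' : ∀ j, 0 < -u j → (-u j) * ε' < 1 := by
    intro j hj
    have h1 : -u j ≤ 1 := by have := abs_le.mp (habs j); linarith [this.1]
    nlinarith
  obtain ⟨δ1, hδ1, H1⟩ := key u hnz ε' hε' hε2
  obtain ⟨δ2, hδ2, H2⟩ := key (fun j => -u j) (fun j => neg_ne_zero.mpr (hnz j)) ε' hε' hε2'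
  refine ⟨min δ1 δ2, lt_min hδ1 hδ2, ?_⟩
  intro x hx hxδ y hPhi
  have hy1 : y < ε' := by
    by_contra h
    push_neg at h
    exact H1 x hx (hxδ.trans_le (min_le_left _ _)) y h hPhi
  have hy2 : -y < ε' := by
    by_contra h
    push_neg at h
    have h0 : Phi (fun j => -u j) x (-y) = 0 := by rw [Phi_neg, hPhi, neg_zero]
    exact H2 x hx (hxδ.trans_le (min_le_right _ _)) (-y) h h0
  have : |y| < ε' := abs_lt.mpr ⟨by linarith, hy1⟩
  exact this.trans_le (min_le_left _ _)
end

section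
/- Let u ∈ ℝ^{n+1} be a unit vector with all entries nonzero. For every x ∈ (0, π) and every real y with Φ_u(x, y) = 0, one has −(1 − x·cot x) ≤ y ≤ 1 − x·cot x. -/
open Real Finset

/-- Concavity consequence: sinc is antitone in the weak form `c * sin b ≤ b * sin c`. -/
lemma sinc_aux {c b : ℝ} (hc : 0 < c) (hcb : c ≤ b) (hb : b ≤ Real.pi) :
    c * Real.sin b ≤ b * Real.sin c := by
  rcases eq_or_lt_of_le hcb with rfl | hlt
  · exact le_rfl
  have hb0 : 0 < b := lt_trans hc hlt
  have h := strictConcaveOn_sin_Icc.concaveOn.2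
    (Set.mem_Icc.2 ⟨le_rfl, Real.pi_nonneg⟩)
    (Set.mem_Icc.2 ⟨hb0.le, hb⟩)
    (show (0:ℝ) ≤ 1 - c / b by rw [sub_nonneg]; exact div_le_one_of_le₀ hcb hb0.le)
    (show (0:ℝ) ≤ c / b by positivity) (by ring)
  simp only [smul_eq_mul, mul_zero, Real.sin_zero, zero_add] at h
  rw [div_mul_cancel₀ _ hb0.ne'] at h
  calc c * Real.sin b = (c / b * Real.sin b) * b := by field_simp
    _ ≤ Real.sin c * b := by nlinarith
    _ = b * Real.sin c := mul_comm _ _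

/-- `s * cos s ≤ sin s` on `(0, π)`. -/
lemma scos_le_sin {s : ℝ} (h0 : 0 < s) (hs : s < Real.pi) : s * Real.cos s ≤ Real.sin s := by
  rcases le_or_gt (Real.cos s) 0 with h | h
  · have : 0 ≤ Real.sin s := (Real.sin_pos_of_pos_of_lt_pi h0 hs).le
    nlinarith
  · have hs2 : s < Real.pi / 2 := by
      by_contra hcon
      push_neg at hcon
      have := Real.cos_nonpos_of_pi_div_two_le_of_le hcon (by linarith [Real.pi_pos])
      linarith
    have ht := Real.lt_tan h0 hs2
    rw [Real.tan_eq_sin_div_cos] at ht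
    calc s * Real.cos s ≤ (Real.sin s / Real.cos s) * Real.cos s := by nlinarith
      _ = Real.sin s := by field_simp

/-- Core monotonicity inequality: for `0 < a ≤ b < π`,
`b/a - b*cot a ≤ 1 - b*cot b`. -/
lemma core_ineq {a b : ℝ} (ha : 0 < a) (hab : a ≤ b) (hb : b < Real.pi) :
    b / a - b * Real.cot a ≤ 1 - b * Real.cot b := by
  have hb0 : 0 < b := lt_of_lt_of_le ha hab
  have hsa : 0 < Real.sin a := Real.sin_pos_of_pos_of_lt_pi ha (lt_of_le_of_lt hab hb)
  have hsb : 0 < Real.sin b := Real.sin_pos_of_pos_of_lt_pi hb0 hb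
  -- key: (b - a) * (sin a * sin b) ≤ a * b * sin (b - a)
  have key : (b - a) * (Real.sin a * Real.sin b) ≤ a * b * Real.sin (b - a) := by
    rcases eq_or_lt_of_le hab with rfl | hlt
    · simp
    · set c := b - a with hc
      have hc0 : 0 < c := by simp [hc]; linarith
      have hcb : c ≤ b := by simp [hc]; linarith
      have h1 : c * Real.sin b ≤ b * Real.sin c := sinc_aux hc0 hcb hb.le
      have h2 : Real.sin a ≤ a := Real.sin_le ha.le
      have hsc : 0 < Real.sin c := Real.sin_pos_of_pos_of_lt_pi hc0 (lt_of_le_of_lt hcb hb)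
      calc c * (Real.sin a * Real.sin b) ≤ c * (a * Real.sin b) := by
            nlinarith [mul_nonneg (mul_nonneg hc0.le (sub_nonneg.2 h2)) hsb.le]
        _ = a * (c * Real.sin b) := by ring
        _ ≤ a * (b * Real.sin c) := by nlinarith [mul_nonneg ha.le (sub_nonneg.2 h1)]
        _ = a * b * Real.sin c := by ring
  have hsub : Real.sin (b - a) = Real.sin b * Real.cos a - Real.cos b * Real.sin a :=
    Real.sin_sub b a
  rw [Real.cot_eq_cos_div_sin, Real.cot_eq_cos_div_sin]
  rw [hsub] at key
  have h1 : b / a - b * (Real.cos a / Real.sin a)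
      = (b * Real.sin a - a * (b * Real.cos a)) / (a * Real.sin a) := by
    field_simp
  have h2 : 1 - b * (Real.cos b / Real.sin b)
      = (Real.sin b - b * Real.cos b) / Real.sin b := by
    field_simp
  rw [h1, h2, div_le_div_iff₀ (by positivity) hsb]
  nlinarith [key]

lemma cot_pos_bound {s : ℝ} (h0 : 0 < s) (hs : s < Real.pi) : Real.cot s ≤ 1 / s := by
  have hsa : 0 < Real.sin s := Real.sin_pos_of_pos_of_lt_pi h0 hs
  rw [Real.cot_eq_cos_div_sin, div_le_div_iff₀ hsa h0]
  have := scos_le_sin h0 hs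
  nlinarith

lemma arccot_cot {α : ℝ} (h0 : 0 < α) (hπ : α < Real.pi) : arccot (Real.cot α) = α := by
  have h1 : Real.cot α = Real.tan (Real.pi / 2 - α) := by
    rw [Real.tan_eq_sin_div_cos, Real.sin_pi_div_two_sub, Real.cos_pi_div_two_sub,
      Real.cot_eq_cos_div_sin]
  rw [arccot, h1, Real.arctan_tan (by linarith) (by linarith)]
  ring

lemma lt_arccot {θ α : ℝ} (h0 : 0 < α) (hπ : α < Real.pi) (h : θ < Real.cot α) :
    α < arccot θ := by
  have := Real.arctan_strictMono h
  have h2 := arccot_cot h0 hπ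
  rw [arccot] at h2 ⊢
  linarith

lemma arccot_lt {θ α : ℝ} (h0 : 0 < α) (hπ : α < Real.pi) (h : Real.cot α < θ) :
    arccot θ < α := by
  have := Real.arctan_strictMono h
  have h2 := arccot_cot h0 hπ
  rw [arccot] at h2 ⊢
  linarith

/-- One-sided main estimate. -/
lemma key_le (n : ℕ) (u : Fin (n + 1) → ℝ) (hu : ∑ j, (u j) ^ 2 = 1)
    (hnz : ∀ j, u j ≠ 0) (x : ℝ) (hx : x ∈ Set.Ioo 0 Real.pi)
    (y : ℝ) (hy : Phi u x y = 0) : y ≤ 1 - x * Real.cot x := by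
  obtain ⟨hx0, hxπ⟩ := hx
  by_contra hcon
  push_neg at hcon
  have hsx : 0 < Real.sin x := Real.sin_pos_of_pos_of_lt_pi hx0 hxπ
  have hxc : 0 ≤ 1 - x * Real.cot x := by
    have := cot_pos_bound hx0 hxπ
    have : x * Real.cot x ≤ x * (1 / x) := by nlinarith
    rw [mul_one_div, div_self hx0.ne'] at this
    linarith
  have hy0 : 0 < y := lt_of_le_of_lt hxc hcon
  -- per-index bounds
  have hle1 : ∀ j, |u j| ≤ 1 := by
    intro j
    rw [← sq_le_one_iff_abs_le_one]
    calc (u j) ^ 2 ≤ ∑ k, (u k) ^ 2 :=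
          Finset.single_le_sum (fun k _ => sq_nonneg (u k)) (Finset.mem_univ j)
      _ = 1 := hu
  -- positive entries
  have hpos : ∀ j, 0 < u j → x * u j < arccot ((1 / u j - y) / x) := by
    intro j hj
    have ht1 : u j ≤ 1 := (abs_le.1 (hle1 j)).2
    have hxt0 : 0 < x * u j := mul_pos hx0 hj
    have hxtπ : x * u j < Real.pi := lt_of_le_of_lt (by nlinarith) hxπ
    apply lt_arccot hxt0 hxtπ
    rw [div_lt_iff₀ hx0]
    have hcore := core_ineq (a := x * u j) (b := x) hxt0 (by nlinarith) hxπ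
    have hxx : x / (x * u j) = 1 / u j := by rw [← div_div, div_self hx0.ne']
    rw [hxx] at hcore
    linarith [hcore, mul_comm (Real.cot (x * u j)) x]
  -- negative entries
  have hneg : ∀ j, u j < 0 → arccot (-(1 / u j - y) / x) < x * (-u j) := by
    intro j hj
    set t := -u j with htdef
    have ht0 : 0 < t := by simp [htdef]; linarith
    have ht1 : t ≤ 1 := by
      have := (abs_le.1 (hle1 j)).1; simp [htdef]; linarith
    have hxt0 : 0 < x * t := mul_pos hx0 ht0
    have hxtπ : x * t < Real.pi := lt_of_le_of_lt (by nlinarith) hxπ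
    apply arccot_lt hxt0 hxtπ
    rw [lt_div_iff₀ hx0]
    have hcb : Real.cot (x * t) ≤ 1 / (x * t) := cot_pos_bound hxt0 hxtπ
    have h1 : 1 / u j = -(1 / t) := by rw [htdef]; field_simp
    rw [h1]
    have h2 : Real.cot (x * t) * x ≤ 1 / t := by
      have : Real.cot (x * t) * x ≤ (1 / (x * t)) * x := by nlinarith
      calc Real.cot (x * t) * x ≤ 1 / (x * t) * x := this
        _ = 1 / t := by field_simp
    have : -(-(1 / t) - y) = 1 / t + y := by ring
    rw [this]
    linarith
  -- assemble
  set P := Finset.univ.filter (fun j => 0 < u j) with hP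
  set N := Finset.univ.filter (fun j => u j < 0) with hN
  have hPN : ∀ f : Fin (n + 1) → ℝ, (∑ j ∈ P, f j) + (∑ j ∈ N, f j) = ∑ j, f j := by
    intro f
    rw [← Finset.sum_filter_add_sum_filter_not Finset.univ (fun j => 0 < u j) f]
    congr 1
    apply Finset.sum_congr _ (fun _ _ => rfl)
    apply Finset.filter_congr
    intro j _
    constructor
    · exact fun h => asymm h
    · exact fun h => lt_of_le_of_ne (not_lt.1 h) (hnz j)
  have hsum : x * ∑ j, u j = (∑ j ∈ P, x * u j) + ∑ j ∈ N, x * u j := by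
    rw [hPN (fun j => x * u j), Finset.mul_sum]
  have hPhi : Phi u x y = (∑ j ∈ P, (x * u j - arccot ((1 / u j - y) / x)))
      + ∑ j ∈ N, (x * u j + arccot (-(1 / u j - y) / x)) := by
    rw [Phi, Finset.sum_sub_distrib, Finset.sum_add_distrib]
    rw [← hP, ← hN]
    linarith [hsum]
  have hPle : (∑ j ∈ P, (x * u j - arccot ((1 / u j - y) / x))) ≤ 0 :=
    Finset.sum_nonpos (fun j hj => by
      have := hpos j (Finset.mem_filter.1 hj).2; linarith)
  have hNle : (∑ j ∈ N, (x * u j + arccot (-(1 / u j - y) / x))) ≤ 0 :=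
    Finset.sum_nonpos (fun j hj => by
      have := hneg j (Finset.mem_filter.1 hj).2; linarith)
  -- strictness
  have hlt : Phi u x y < 0 := by
    rcases (hnz 0).lt_or_gt with h0 | h0
    · have hmem : (0 : Fin (n + 1)) ∈ N := Finset.mem_filter.2 ⟨Finset.mem_univ _, h0⟩
      have : (∑ j ∈ N, (x * u j + arccot (-(1 / u j - y) / x))) < ∑ j ∈ N, (0 : ℝ) := by
        apply Finset.sum_lt_sum_of_nonempty ⟨0, hmem⟩
        intro j hj
        have := hneg j (Finset.mem_filter.1 hj).2; linarith
      rw [Finset.sum_const_zero] at this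
      linarith [hPhi, hPle]
    · have hmem : (0 : Fin (n + 1)) ∈ P := Finset.mem_filter.2 ⟨Finset.mem_univ _, h0⟩
      have : (∑ j ∈ P, (x * u j - arccot ((1 / u j - y) / x))) < ∑ j ∈ P, (0 : ℝ) := by
        apply Finset.sum_lt_sum_of_nonempty ⟨0, hmem⟩
        intro j hj
        have := hpos j (Finset.mem_filter.1 hj).2; linarith
      rw [Finset.sum_const_zero] at this
      linarith [hPhi, hNle]
  exact absurd hy (ne_of_lt hlt)

lemma phi_neg (m : ℕ) (u : Fin m → ℝ) (hnz : ∀ j, u j ≠ 0) (x y : ℝ) :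
    Phi (fun j => -u j) x (-y) = -Phi u x y := by
  have h1 : (Finset.univ.filter (fun j => 0 < -u j))
      = Finset.univ.filter (fun j : Fin m => u j < 0) := by
    apply Finset.filter_congr; intro j _; simp
  have h2 : (Finset.univ.filter (fun j => -u j < 0))
      = Finset.univ.filter (fun j : Fin m => 0 < u j) := by
    apply Finset.filter_congr; intro j _; simp
  rw [Phi, Phi, h1, h2]
  have e1 : ∀ j ∈ Finset.univ.filter (fun j : Fin m => u j < 0),
      arccot ((1 / (-u j) - -y) / x) = arccot (-(1 / u j - y) / x) := by
    intro j hj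
    congr 1
    rw [one_div_neg_eq_neg_one_div]
    ring
  have e2 : ∀ j ∈ Finset.univ.filter (fun j : Fin m => 0 < u j),
      arccot (-(1 / (-u j) - -y) / x) = arccot ((1 / u j - y) / x) := by
    intro j hj
    congr 1
    rw [one_div_neg_eq_neg_one_div]
    ring
  rw [Finset.sum_congr rfl e1, Finset.sum_congr rfl e2]
  have : ∑ j, -u j = -∑ j, u j := by rw [Finset.sum_neg_distrib]
  rw [this]
  ring

theorem stmt12 (n : ℕ) (u : Fin (n + 1) → ℝ) (hu : ∑ j, (u j) ^ 2 = 1)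
    (hnz : ∀ j, u j ≠ 0) (x : ℝ) (hx : x ∈ Set.Ioo 0 Real.pi)
    (y : ℝ) (hy : Phi u x y = 0) :
    -(1 - x * Real.cot x) ≤ y ∧ y ≤ 1 - x * Real.cot x := by
  constructor
  · have hnz' : ∀ j, -u j ≠ 0 := fun j => neg_ne_zero.2 (hnz j)
    have hu' : ∑ j, (-u j) ^ 2 = 1 := by simpa using hu
    have hy' : Phi (fun j => -u j) x (-y) = 0 := by
      rw [phi_neg (n + 1) u hnz x y, hy, neg_zero]
    have := key_le n (fun j => -u j) hu' hnz' x hx (-y) hy'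
    linarith
  · exact key_le n u hu hnz x hx y hy
end

section
/- Let u_1, …, u_{n+1} be real numbers, all nonzero, with Σ_j u_j² = 1, and let x, y be real numbers with x ≠ 0. Then (Σ_j x/(x² + (1/u_j − y)²))² + (Σ_j (−y + u_j·(x² + y²))/(x² + (1/u_j − y)²))² ≤ Σ_j (x² + y²)/(x² + (1/u_j − y)²). -/
theorem stmt15 (n : ℕ) (u : Fin (n + 1) → ℝ) (hnz : ∀ j, u j ≠ 0)
    (hu : ∑ j, (u j) ^ 2 = 1) (x y : ℝ) (hx : x ≠ 0) :
    (∑ j, x / (x ^ 2 + (1 / u j - y) ^ 2)) ^ 2 +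
      (∑ j, (-y + u j * (x ^ 2 + y ^ 2)) / (x ^ 2 + (1 / u j - y) ^ 2)) ^ 2 ≤
    ∑ j, (x ^ 2 + y ^ 2) / (x ^ 2 + (1 / u j - y) ^ 2) := by
  have hDpos : ∀ j, 0 < x ^ 2 + (1 / u j - y) ^ 2 := fun j =>
    add_pos_of_pos_of_nonneg (pow_pos (abs_pos.mpr hx) 2 |>.trans_eq (sq_abs x)) (sq_nonneg _)
  set p : Fin (n + 1) → ℝ := fun j => x / (u j * (x ^ 2 + (1 / u j - y) ^ 2)) with hp
  set q : Fin (n + 1) → ℝ :=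
    fun j => (-y + u j * (x ^ 2 + y ^ 2)) / (u j * (x ^ 2 + (1 / u j - y) ^ 2)) with hq
  have key : ∀ j, p j ^ 2 + q j ^ 2 = (x ^ 2 + y ^ 2) / (x ^ 2 + (1 / u j - y) ^ 2) := by
    intro j
    have h1 := hnz j
    have h2 := (hDpos j).ne'
    rw [hp, hq]
    field_simp
    ring
  have e1 : ∀ j, x / (x ^ 2 + (1 / u j - y) ^ 2) = u j * p j := by
    intro j
    have h1 := hnz j
    have h2 := (hDpos j).ne'
    rw [hp]
    field_simp
  have e2 : ∀ j, (-y + u j * (x ^ 2 + y ^ 2)) / (x ^ 2 + (1 / u j - y) ^ 2) = u j * q j := by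
    intro j
    have h1 := hnz j
    have h2 := (hDpos j).ne'
    rw [hq]
    field_simp
  calc (∑ j, x / (x ^ 2 + (1 / u j - y) ^ 2)) ^ 2 +
      (∑ j, (-y + u j * (x ^ 2 + y ^ 2)) / (x ^ 2 + (1 / u j - y) ^ 2)) ^ 2
      = (∑ j, u j * p j) ^ 2 + (∑ j, u j * q j) ^ 2 := by
        simp only [e1, e2]
    _ ≤ (∑ j, u j ^ 2) * (∑ j, p j ^ 2) + (∑ j, u j ^ 2) * (∑ j, q j ^ 2) := by
        gcongr <;> exact Finset.sum_mul_sq_le_sq_mul_sq _ _ _ |>.trans_eq rfl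
    _ = ∑ j, (p j ^ 2 + q j ^ 2) := by rw [hu, one_mul, one_mul, Finset.sum_add_distrib]
    _ = ∑ j, (x ^ 2 + y ^ 2) / (x ^ 2 + (1 / u j - y) ^ 2) := by simp only [key]
end

section
/- Let u ∈ ℝ^{n+1} be a unit vector with all entries nonzero, let x₀ > 0, and let y : ℝ → ℝ be a function such that Φ_u(x, y(x)) = 0 for all x in some neighborhood of x₀ contained in (0, ∞), and such that y has derivative d at x₀. Then d·Σ_j x₀/(x₀² + (1/u_j − y(x₀))²) = Σ_j (−y(x₀) + u_j·(x₀² + y(x₀)²))/(x₀² + (1/u_j − y(x₀))²). -/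
/-!
Since `arccot (-θ) = π - arccot θ`, away from zero entries `Φ_u(x, y)` equals
`x ∑ u_j - ∑ arccot ((1/u_j - y)/x)` up to an additive constant. Differentiating
`x ↦ Φ_u(x, y(x))`, which vanishes near `x₀`, gives `∑ u_j = ∑ (d x₀ + 1/u_j - y₀) / D_j`
with `D_j = x₀² + (1/u_j - y₀)²`, and the identity `u_j D_j - (1/u_j - y₀) = -y₀ + u_j (x₀² + y₀²)`
turns this into the claimed formula.
-/

open Finset

lemma arccot_neg (θ : ℝ) : arccot (-θ) = Real.pi - arccot θ := by
  simp only [arccot, Real.arctan_neg]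
  ring

lemma HasDerivAt.arccot {f : ℝ → ℝ} {f' x : ℝ} (hf : HasDerivAt f f' x) :
    HasDerivAt (fun t => arccot (f t)) (-f' / (1 + f x ^ 2)) x :=
  (hf.arctan.const_sub (Real.pi / 2)).congr_deriv (by ring)

lemma hasDerivAt_arccot_sub_div {f : ℝ → ℝ} {f' x : ℝ} (hf : HasDerivAt f f' x) (hx : x ≠ 0)
    (c : ℝ) :
    HasDerivAt (fun t => arccot ((c - f t) / t))
      ((f' * x + (c - f x)) / (x ^ 2 + (c - f x) ^ 2)) x := by
  convert (((hasDerivAt_const x c).fun_sub hf).fun_div (hasDerivAt_id' x) hx).arccot using 1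
  have : 0 < x ^ 2 + (c - f x) ^ 2 := by positivity
  field_simp
  ring

lemma Phi_eq {m : ℕ} {u : Fin m → ℝ} (hu : ∀ j, u j ≠ 0) (x y : ℝ) :
    Phi u x y = x * ∑ j, u j - ∑ j, arccot ((1 / u j - y) / x)
      + Real.pi * #{j | u j < 0} := by
  have hneg : univ.filter (fun j => ¬ 0 < u j) = univ.filter (fun j => u j < 0) :=
    filter_congr fun j _ => by rw [not_lt, (hu j).le_iff_lt]
  have hsplit := sum_filter_add_sum_filter_not univ (fun j => 0 < u j)
    (fun j => arccot ((1 / u j - y) / x))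
  rw [hneg] at hsplit
  simp only [Phi, neg_div, arccot_neg, sum_sub_distrib, sum_const, nsmul_eq_mul, ← hsplit]
  ring

lemma hasDerivAt_Phi_comp {m : ℕ} {u : Fin m → ℝ} (hu : ∀ j, u j ≠ 0) {y : ℝ → ℝ} {d x₀ : ℝ}
    (hy : HasDerivAt y d x₀) (hx₀ : x₀ ≠ 0) :
    HasDerivAt (fun x => Phi u x (y x))
      (∑ j, u j - ∑ j, (d * x₀ + (1 / u j - y x₀)) / (x₀ ^ 2 + (1 / u j - y x₀) ^ 2)) x₀ := by
  simp_rw [Phi_eq hu]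
  refine (((hasDerivAt_id x₀).mul_const _).fun_sub (HasDerivAt.fun_sum fun j _ =>
    hasDerivAt_arccot_sub_div hy hx₀ (1 / u j))).add_const _ |>.congr_deriv ?_
  rw [one_mul]

lemma sub_div_sq_add_sq_eq {a x y d : ℝ} (ha : a ≠ 0) (hx : x ≠ 0) :
    a - (d * x + (1 / a - y)) / (x ^ 2 + (1 / a - y) ^ 2) =
      (-y + a * (x ^ 2 + y ^ 2)) / (x ^ 2 + (1 / a - y) ^ 2)
        - d * (x / (x ^ 2 + (1 / a - y) ^ 2)) := by
  have : 0 < x ^ 2 + (1 / a - y) ^ 2 := by positivity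
  field_simp
  ring

theorem stmt16_general (n : ℕ) (u : Fin (n + 1) → ℝ)
    (hnz : ∀ j, u j ≠ 0) (x₀ : ℝ) (hx₀ : 0 < x₀) (y : ℝ → ℝ) (d : ℝ)
    (hnbhd : ∃ s ∈ nhds x₀, s ⊆ Set.Ioi (0 : ℝ) ∧ ∀ x ∈ s, Phi u x (y x) = 0)
    (hd : HasDerivAt y d x₀) :
    d * ∑ j, x₀ / (x₀ ^ 2 + (1 / u j - y x₀) ^ 2) =
      ∑ j, (-(y x₀) + u j * (x₀ ^ 2 + (y x₀) ^ 2)) / (x₀ ^ 2 + (1 / u j - y x₀) ^ 2) := by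
  obtain ⟨s, hs, -, hzero⟩ := hnbhd
  have hconst : HasDerivAt (fun x => Phi u x (y x)) 0 x₀ :=
    (hasDerivAt_const x₀ 0).congr_of_eventuallyEq (Filter.eventually_of_mem hs hzero)
  have hsum := (hasDerivAt_Phi_comp hnz hd hx₀.ne').unique hconst
  rw [← sum_sub_distrib] at hsum
  simp_rw [sub_div_sq_add_sq_eq (hnz _) hx₀.ne', sum_sub_distrib, ← mul_sum] at hsum
  linarith

theorem stmt16 (n : ℕ) (u : Fin (n + 1) → ℝ) (hu : ∑ j, (u j) ^ 2 = 1)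
    (hnz : ∀ j, u j ≠ 0) (x₀ : ℝ) (hx₀ : 0 < x₀) (y : ℝ → ℝ) (d : ℝ)
    (hnbhd : ∃ s ∈ nhds x₀, s ⊆ Set.Ioi (0 : ℝ) ∧ ∀ x ∈ s, Phi u x (y x) = 0)
    (hd : HasDerivAt y d x₀) :
    d * ∑ j, x₀ / (x₀ ^ 2 + (1 / u j - y x₀) ^ 2) =
      ∑ j, (-(y x₀) + u j * (x₀ ^ 2 + (y x₀) ^ 2)) / (x₀ ^ 2 + (1 / u j - y x₀) ^ 2) :=
  stmt16_general n u hnz x₀ hx₀ y d hnbhd hd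
end
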